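/- arXiv:quant-ph/0608035 — 3 statements merged into one kernel-verified Lean document; each statement's English description precedes it below -/
import Mathlib

section
/- In a monoidal category, the endomorphism monoid of the tensor unit C(I, I) is commutative: for all scalars s, t : I → I, s ∘ t = t ∘ s. -/
/-!
Eckmann–Hilton: since `λ_ (𝟙_ C) = ρ_ (𝟙_ C)`, whiskering a scalar by the unit on either side is
conjugate to it by the same isomorphism, and whiskerings on opposite sides commute by the
interchange law.
-/

open CategoryTheory MonoidalCategory

namespace CategoryTheory.MonoidalCategory

variable {C : Type*} [Category C] [MonoidalCategory C]

theorem whiskerRight_tensorUnit_eq_conj_leftUnitor (s : 𝟙_ C ⟶ 𝟙_ C) :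
    s ▷ 𝟙_ C = (λ_ (𝟙_ C)).hom ≫ s ≫ (λ_ (𝟙_ C)).inv := by
  rw [whiskerRight_id, unitors_equal, unitors_inv_equal]

end CategoryTheory.MonoidalCategory

/-- In a monoidal category, the endomorphism monoid of the tensor unit is
commutative: scalars commute. -/
theorem scalars_commute {C : Type*} [Category C] [MonoidalCategory C]
    (s t : 𝟙_ C ⟶ 𝟙_ C) : s ≫ t = t ≫ s := by
  have interchange := whisker_exchange s t
  rw [id_whiskerLeft, whiskerRight_tensorUnit_eq_conj_leftUnitor] at interchange
  refine (cancel_mono (λ_ (𝟙_ C)).inv).1 ?_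
  simpa only [Category.assoc, Iso.inv_hom_id_assoc, cancel_epi] using interchange.symm
end

section
/- A linear map f : ℂᵐ → ℂⁿ is a comonoid homomorphism with respect to the basis-copying comonoids (δ^(m), ε^(m)) and (δ^(n), ε^(n)) — i.e. δ^(n) ∘ f = (f ⊗ f) ∘ δ^(m) and ε^(n) ∘ f = ε^(m) — if and only if there exists a function φ : {1,…,m} → {1,…,n} such that f(|i⟩) = |φ(i)⟩ for all i. -/
open TensorProduct

/-- The basis-copying map `δ : |i⟩ ↦ |i⟩ ⊗ |i⟩` on `ℂᵏ`. -/
noncomputable def copyMap (k : ℕ) :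
    (Fin k → ℂ) →ₗ[ℂ] TensorProduct ℂ (Fin k → ℂ) (Fin k → ℂ) :=
  (Pi.basisFun ℂ (Fin k)).constr ℕ fun i => Pi.single i 1 ⊗ₜ Pi.single i 1

/-- The deleting map `ε : |i⟩ ↦ 1` on `ℂᵏ`. -/
noncomputable def delMap (k : ℕ) : (Fin k → ℂ) →ₗ[ℂ] ℂ :=
  (Pi.basisFun ℂ (Fin k)).constr ℕ fun _ => (1 : ℂ)

lemma copyMap_single (k : ℕ) (i : Fin k) :
    copyMap k (Pi.single i 1) = Pi.single i 1 ⊗ₜ[ℂ] Pi.single i 1 := by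
  have h := Module.Basis.constr_basis (Pi.basisFun ℂ (Fin k)) ℕ
    (fun i => (Pi.single i 1 : Fin k → ℂ) ⊗ₜ[ℂ] (Pi.single i 1 : Fin k → ℂ)) i
  simpa [copyMap] using h

lemma delMap_single (k : ℕ) (i : Fin k) : delMap k (Pi.single i 1) = 1 := by
  have h := Module.Basis.constr_basis (Pi.basisFun ℂ (Fin k)) ℕ (fun _ => (1:ℂ)) i
  simpa [delMap] using h

lemma copyMap_apply (k : ℕ) (x : Fin k → ℂ) :
    copyMap k x = ∑ i, x i • ((Pi.single i 1 : Fin k → ℂ) ⊗ₜ[ℂ] Pi.single i 1) := by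
  rw [copyMap, Module.Basis.constr_apply_fintype]
  simp

lemma delMap_apply (k : ℕ) (x : Fin k → ℂ) : delMap k x = ∑ i, x i := by
  rw [delMap, Module.Basis.constr_apply_fintype]
  simp

noncomputable def evalTmul (k : ℕ) (j l : Fin k) :
    TensorProduct ℂ (Fin k → ℂ) (Fin k → ℂ) →ₗ[ℂ] ℂ :=
  TensorProduct.lift ((LinearMap.mul ℂ ℂ).compl₁₂ (LinearMap.proj j) (LinearMap.proj l))

@[simp] lemma evalTmul_tmul (k : ℕ) (j l : Fin k) (x y : Fin k → ℂ) :
    evalTmul k j l (x ⊗ₜ y) = x j * y l := rfl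


/-- A linear map `f : ℂᵐ → ℂⁿ` is a comonoid homomorphism for the
basis-copying comonoids iff it is induced by a function `φ : {1,…,m} → {1,…,n}`
on the standard basis vectors. -/
theorem comonoid_hom_iff_function (m n : ℕ) (f : (Fin m → ℂ) →ₗ[ℂ] (Fin n → ℂ)) :
    ((copyMap n).comp f = (TensorProduct.map f f).comp (copyMap m) ∧
      (delMap n).comp f = delMap m) ↔
    ∃ φ : Fin m → Fin n, ∀ i, f (Pi.single i 1) = Pi.single (φ i) 1 := by
  constructor
  · rintro ⟨hδ, hε⟩
    have key : ∀ i : Fin m, ∃ j : Fin n, f (Pi.single i 1) = Pi.single j 1 := by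
      intro i
      set v := f (Pi.single i 1) with hv
      have hcopy : copyMap n v = v ⊗ₜ v := by
        have h := congrArg (fun g => g (Pi.single i 1)) hδ
        simpa [copyMap_single, ← hv] using h
      have hsum : ∑ j, v j = 1 := by
        have h := congrArg (fun g => g (Pi.single i 1)) hε
        simp only [LinearMap.comp_apply, ← hv, delMap_single] at h
        rw [← delMap_apply]; exact h
      have hprod : ∀ j l : Fin n, v j * v l = if j = l then v j else 0 := by
        intro j l
        have h := congrArg (evalTmul n j l) hcopy
        rw [copyMap_apply] at h
        simp only [map_sum, map_smul, evalTmul_tmul, Pi.single_apply, smul_eq_mul] at h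
        rw [← h]
        simp only [mul_ite, ite_mul, mul_one, mul_zero, one_mul, zero_mul]
        rw [Finset.sum_ite_eq Finset.univ l (fun x => if j = x then v x else 0)]
        simp only [Finset.mem_univ, if_true]
        split_ifs with h1
        · rw [h1]
        · rfl
      obtain ⟨j, hj⟩ : ∃ j, v j ≠ 0 := by
        by_contra hc
        push_neg at hc
        simp [hc] at hsum
      have hj1 : v j = 1 := by
        have h2 : v j * v j = v j := by simpa using hprod j j
        exact mul_right_cancel₀ hj (by rw [h2, one_mul])
      refine ⟨j, ?_⟩
      funext l
      rcases eq_or_ne l j with rfl | hne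
      · simp [hj1]
      · have h0 : v j * v l = 0 := by simpa [hne.symm] using hprod j l
        have : v l = 0 := by
          rcases mul_eq_zero.mp h0 with h | h
          · exact absurd h hj
          · exact h
        simp [this, Pi.single_apply, hne]
    choose φ hφ using key
    exact ⟨φ, hφ⟩
  · rintro ⟨φ, hφ⟩
    constructor
    · apply (Pi.basisFun ℂ (Fin m)).ext
      intro i
      simp [LinearMap.comp_apply, hφ, copyMap_single, TensorProduct.map_tmul]
    · apply (Pi.basisFun ℂ (Fin m)).ext
      intro i
      simp [LinearMap.comp_apply, hφ, delMap_single]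
end

section
/- A morphism M : H → ℂᵏ ⊗ H in FdHilb that is ℂᵏ-self-adjoint and an Eilenberg–Moore coalgebra for the comonad (ℂᵏ ⊗ −) induced by the classical object (ℂᵏ, δ, ε) corresponds exactly to a complete family of k mutually orthogonal self-adjoint projectors {Pᵢ}ᵢ₌₁^k on H with Σᵢ Pᵢ = 1_H, via M(ψ) = Σᵢ |i⟩ ⊗ Pᵢ(ψ). -/
/-- A morphism `M : H → ℂᵏ ⊗ H` (encoded as `H → (Fin k → H)` with the ℓ²
structure, `M ψ = Σᵢ |i⟩ ⊗ Pᵢ ψ`) is an `X`-self-adjoint Eilenberg–Moore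
coalgebra for the comonad `ℂᵏ ⊗ −` — i.e. it satisfies the coalgebra square
`(δ ⊗ 1) ∘ M = (1 ⊗ M) ∘ M`, the counit triangle `(ε ⊗ 1) ∘ M = 1`, and
`X`-self-adjointness `(1 ⊗ M†) ∘ (η ⊗ 1) ∘ λ = M` — if and only if the
components `Pᵢ` form a complete family of mutually orthogonal self-adjoint
projectors. -/
theorem spectrum_iff_projectors
    {H : Type*} [NormedAddCommGroup H] [InnerProductSpace ℂ H] [FiniteDimensional ℂ H]
    (k : ℕ) (P : Fin k → (H →ₗ[ℂ] H))
    (M : H →ₗ[ℂ] PiLp 2 (fun _ : Fin k => H))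
    (hM : ∀ (ψ : H) (i : Fin k), M ψ i = P i ψ) :
    ((∀ (ψ : H) (i j : Fin k), M (M ψ i) j = if i = j then M ψ i else 0) ∧
     (∀ ψ : H, ∑ i, M ψ i = ψ) ∧
     (∀ (ψ : H) (i : Fin k), M ψ i = LinearMap.adjoint M (WithLp.toLp 2 (Pi.single i ψ)))) ↔
    ((∀ i j, i ≠ j → (P i).comp (P j) = 0) ∧
     (∀ i, (P i).comp (P i) = P i) ∧
     (∑ i, P i) = LinearMap.id ∧
     (∀ i, LinearMap.adjoint (P i) = P i)) := by
  have hadj : ∀ (ψ : H) (i : Fin k),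
      LinearMap.adjoint M (WithLp.toLp 2 (Pi.single i ψ)) = LinearMap.adjoint (P i) ψ := by
    intro ψ i
    apply ext_inner_right ℂ
    intro φ
    rw [LinearMap.adjoint_inner_left, LinearMap.adjoint_inner_left, PiLp.inner_apply]
    rw [Finset.sum_eq_single i]
    · simp [hM]
    · intro j _ hj
      simp [Pi.single_eq_of_ne hj]
    · simp
  constructor
  · rintro ⟨hsq, htr, hsa⟩
    refine ⟨?_, ?_, ?_, ?_⟩
    · intro i j hij
      ext ψ
      have := hsq ψ j i
      simp [hM, if_neg (Ne.symm hij)] at this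
      simpa [hM] using this
    · intro i
      ext ψ
      have := hsq ψ i i
      simp [hM] at this
      simpa [hM] using this
    · ext ψ
      have := htr ψ
      simp [hM] at this
      simpa [LinearMap.sum_apply] using this
    · intro i
      ext ψ
      have := hsa ψ i
      rw [hadj, hM] at this
      exact this.symm
  · rintro ⟨horth, hproj, hsum, hsa⟩
    refine ⟨?_, ?_, ?_⟩
    · intro ψ i j
      by_cases h : i = j
      · subst h
        simp only [hM, if_pos rfl]
        exact DFunLike.congr_fun (hproj i) ψ
      · simp only [hM, if_neg h]
        have := DFunLike.congr_fun (horth j i (Ne.symm h)) ψ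
        simpa using this
    · intro ψ
      simp only [hM]
      have := DFunLike.congr_fun hsum ψ
      simpa [LinearMap.sum_apply] using this
    · intro ψ i
      rw [hadj, hsa, hM]
end
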